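/- arXiv:2509.22569 — 3 statements merged into one kernel-verified Lean document; each statement's English description precedes it below -/
import Mathlib

section
/- Let θ ∈ C_K, and let v : I → ℕ be a nonzero function satisfying v(0)·δ(j) ≤ v(j) ≤ n·δ(j) for all j ∈ J. Then Σ_{i∈I} θ(i)·v(i) > 0. (This is the stability inequality θ(dim M̄) > 0 for a submodule M̄ of dimension vector (0, v), proved in Proposition 3.1(1) via the decomposition θ(v) = v(0)·θ(δ|_J) + Σ_{j∈J\{0}} θ(j)·(v(j) − v(0)δ(j)) + Σ_{k∈K} θ(k)·v(k).) -/
/-!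
STATEMENT 1: For θ ∈ C_K and a nonzero v : I → ℕ with
v(0)·δ(j) ≤ v(j) ≤ n·δ(j) for all j ∈ J, one has Σ_{i∈I} θ(i)·v(i) > 0.
(The stability inequality for submodules of dimension vector (0,v) in the
proof of Proposition 3.1(1).)
-/
theorem stability_dim_vector_r_eq_zero
    {I : Type*} [Fintype I] [DecidableEq I]
    (i0 : I) (δ : I → ℕ) (hδ : ∀ i, 1 ≤ δ i) (hδ0 : δ i0 = 1)
    (n : ℕ) (hn : 1 ≤ n)
    (J : Finset I) (h0J : i0 ∈ J)
    (θ : I → ℚ)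
    -- θ ∈ C_K :
    (hθ1 : 0 < ∑ j ∈ J, (δ j : ℚ) * θ j)
    (hθ2 : ∀ j ∈ J, j ≠ i0 → ((n : ℚ) - 1) * (∑ i, (δ i : ℚ) * θ i) < θ j)
    (hθ3 : ∀ k, k ∉ J → 0 < θ k)
    (v : I → ℕ) (hv : v ≠ 0)
    (hvlo : ∀ j ∈ J, v i0 * δ j ≤ v j)
    (hvhi : ∀ j ∈ J, v j ≤ n * δ j) :
    0 < ∑ i, θ i * (v i : ℚ) := by
  classical
  -- θ(j) > 0 for j ∈ J, j ≠ i0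
  have hθδ : 0 ≤ ∑ i, (δ i : ℚ) * θ i := by
    rw [← Finset.sum_add_sum_compl J]
    have h2 : 0 ≤ ∑ i ∈ Jᶜ, (δ i : ℚ) * θ i := by
      apply Finset.sum_nonneg
      intro k hk
      have := hθ3 k (by simpa using hk)
      positivity
    linarith
  have hθjpos : ∀ j ∈ J, j ≠ i0 → 0 < θ j := by
    intro j hj hji
    have h := hθ2 j hj hji
    have hn' : (1:ℚ) ≤ (n:ℚ) := by exact_mod_cast hn
    nlinarith [mul_nonneg (by linarith : (0:ℚ) ≤ (n:ℚ)-1) hθδ]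
  -- decomposition
  set c1 : ℚ := (v i0 : ℚ) * ∑ j ∈ J, (δ j : ℚ) * θ j with hc1
  set c2 : ℚ := ∑ j ∈ J.erase i0, θ j * ((v j : ℚ) - (v i0 : ℚ) * δ j) with hc2
  set c3 : ℚ := ∑ k ∈ Jᶜ, θ k * (v k : ℚ) with hc3
  have hdecomp : ∑ i, θ i * (v i : ℚ) = c1 + c2 + c3 := by
    rw [← Finset.sum_add_sum_compl J (fun i => θ i * (v i : ℚ))]
    have hJ : ∑ i ∈ J, θ i * (v i : ℚ) = c1 + c2 := by
      rw [hc1, hc2, ← Finset.add_sum_erase J _ h0J, ← Finset.add_sum_erase J _ h0J,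
        hδ0, mul_add, Finset.mul_sum, add_assoc, ← Finset.sum_add_distrib]
      congr 1
      · push_cast; ring
      · exact Finset.sum_congr rfl fun j _ => by ring
    rw [hJ]
  rw [hdecomp]
  have hc2nn : 0 ≤ c2 := by
    apply Finset.sum_nonneg
    intro j hj
    have hj' := Finset.mem_of_mem_erase hj
    have hne := Finset.ne_of_mem_erase hj
    have h1 := hθjpos j hj' hne
    have h2 := hvlo j hj'
    have : (v i0 : ℚ) * δ j ≤ (v j : ℚ) := by exact_mod_cast h2
    nlinarith
  have hc3nn : 0 ≤ c3 := by
    apply Finset.sum_nonneg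
    intro k hk
    have := hθ3 k (by simpa using hk)
    positivity
  by_cases hv0 : v i0 = 0
  · -- some other coordinate is positive
    obtain ⟨i, hi⟩ : ∃ i, v i ≠ 0 := by
      by_contra h
      push_neg at h
      exact hv (funext h)
    have hvi : 0 < (v i : ℚ) := by
      have := Nat.pos_of_ne_zero hi; exact_mod_cast this
    have hc1z : c1 = 0 := by rw [hc1, hv0]; push_cast; ring
    by_cases hiJ : i ∈ J
    · have hne : i ≠ i0 := by rintro rfl; exact hi hv0
      have hc2pos : 0 < c2 := by
        apply Finset.sum_pos'
        · intro j hj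
          have hj' := Finset.mem_of_mem_erase hj
          have h1 := hθjpos j hj' (Finset.ne_of_mem_erase hj)
          have h2 := hvlo j hj'
          have : (v i0 : ℚ) * δ j ≤ (v j : ℚ) := by exact_mod_cast h2
          nlinarith
        · refine ⟨i, Finset.mem_erase.mpr ⟨hne, hiJ⟩, ?_⟩
          have h1 := hθjpos i hiJ hne
          rw [hv0]
          push_cast
          nlinarith
      linarith
    · have hc3pos : 0 < c3 := by
        apply Finset.sum_pos'
        · intro k hk
          have := hθ3 k (by simpa using hk)
          positivity
        · refine ⟨i, by simpa using hiJ, ?_⟩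
          have := hθ3 i hiJ
          nlinarith
      linarith
  · have hc1pos : 0 < c1 := by
      have : 0 < (v i0 : ℚ) := by
        have := Nat.pos_of_ne_zero hv0; exact_mod_cast this
      exact mul_pos this hθ1
    linarith
end

section
/- Let v : I → ℕ satisfy v(0) ≥ 1, v(0)·δ(j) ≤ v(j) ≤ n·δ(j) for all j ∈ J, and suppose there exists j ∈ J\{0} with v(j) > v(0)·δ(j). Then Σ_{i∈I} θ*(i)·(v(i) − n·δ(i)) > 0. (This is the stability inequality for a proper nonzero submodule of dimension vector (1, v) in the proof of Proposition 3.1(1): one has θ*(v − v(0)·δ|_J) ≥ n·h, while θ*(n·δ − v(0)·δ|_J) = n·h − v(0)·θ*(δ|_J) < n·h since v(0) ≥ 1 and θ*(δ|_J) > 0.) -/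
/-!
STATEMENT 2: For the specific stability vector θ* of the proof of
Proposition 3.1(1), and v : I → ℕ with v(0) ≥ 1,
v(0)·δ(j) ≤ v(j) ≤ n·δ(j) for all j ∈ J, and v(j) > v(0)·δ(j) for some
j ∈ J \ {0}, one has Σ_{i∈I} θ*(i)·(v(i) − n·δ(i)) > 0.
-/
theorem stability_dim_vector_r_eq_one
    {I : Type*} [Fintype I] [DecidableEq I]
    (i0 : I) (δ : I → ℕ) (hδ : ∀ i, 1 ≤ δ i) (hδ0 : δ i0 = 1)
    (n : ℕ) (hn : 1 ≤ n)
    (J : Finset I) (h0J : i0 ∈ J)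
    (h : ℕ) (hh : h = ∑ i, δ i)
    (θs : I → ℚ)
    (hθsJ : ∀ j ∈ J, j ≠ i0 → θs j = (n : ℚ) * h)
    (hθsK : ∀ k, k ∉ J → θs k = 1)
    (hθs0 : θs i0 = (h : ℚ) - (∑ j ∈ J.erase i0, (n : ℚ) * h * δ j)
      - ∑ k ∈ Jᶜ, (δ k : ℚ))
    (v : I → ℕ) (hv0 : 1 ≤ v i0)
    (hvlo : ∀ j ∈ J, v i0 * δ j ≤ v j)
    (hvhi : ∀ j ∈ J, v j ≤ n * δ j)
    (hstrict : ∃ j ∈ J, j ≠ i0 ∧ v i0 * δ j < v j) :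
    0 < ∑ i, θs i * ((v i : ℚ) - (n : ℚ) * δ i) := by
  set A : ℚ := ∑ j ∈ J.erase i0, (δ j : ℚ) with hA_def
  set E : ℚ := ∑ k ∈ Jᶜ, (δ k : ℚ) with hE_def
  set v0 : ℚ := (v i0 : ℚ) with hv0_def
  set nq : ℚ := (n : ℚ) with hnq_def
  have hA : 0 ≤ A := Finset.sum_nonneg fun j _ => by positivity
  have hE : 0 ≤ E := Finset.sum_nonneg fun k _ => by positivity
  -- h = 1 + A + E
  have hhq : (h : ℚ) = 1 + A + E := by
    have : (h : ℚ) = ∑ i, (δ i : ℚ) := by rw [hh]; push_cast; ring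
    rw [this, ← Finset.sum_add_sum_compl J (fun i => (δ i : ℚ)),
      ← Finset.add_sum_erase J (fun i => (δ i : ℚ)) h0J, hδ0]
    push_cast; ring
  have hv0q : 1 ≤ v0 := by rw [hv0_def]; exact_mod_cast hv0
  have hv0n : v0 ≤ nq := by
    have := hvhi i0 h0J
    rw [hδ0, mul_one] at this
    rw [hv0_def, hnq_def]; exact_mod_cast this
  -- rewrite the main sum
  have hS : ∑ i, θs i * ((v i : ℚ) - nq * δ i)
      = θs i0 * (v0 - nq) + nq * h * (∑ j ∈ J.erase i0, ((v j : ℚ) - nq * δ j))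
        + ∑ k ∈ Jᶜ, ((v k : ℚ) - nq * δ k) := by
    rw [← Finset.sum_add_sum_compl J (fun i => θs i * ((v i : ℚ) - nq * δ i)),
      ← Finset.add_sum_erase J (fun i => θs i * ((v i : ℚ) - nq * δ i)) h0J, hδ0,
      Finset.mul_sum]
    have h1 : ∑ j ∈ J.erase i0, θs j * ((v j : ℚ) - nq * δ j)
        = ∑ j ∈ J.erase i0, nq * h * ((v j : ℚ) - nq * δ j) := by
      refine Finset.sum_congr rfl fun j hj => ?_
      rw [hθsJ j (Finset.mem_of_mem_erase hj) (Finset.ne_of_mem_erase hj)]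
    have h2 : ∑ k ∈ Jᶜ, θs k * ((v k : ℚ) - nq * δ k)
        = ∑ k ∈ Jᶜ, ((v k : ℚ) - nq * δ k) := by
      refine Finset.sum_congr rfl fun k hk => ?_
      rw [hθsK k (Finset.mem_compl.mp hk), one_mul]
    rw [h1, h2]
    push_cast
    ring
  have hθ0 : θs i0 = (h : ℚ) - nq * h * A - E := by
    rw [hθs0, hA_def, Finset.mul_sum]
  -- bound on the J.erase sum
  have hT1 : (v0 - nq) * A + 1 ≤ ∑ j ∈ J.erase i0, ((v j : ℚ) - nq * δ j) := by
    obtain ⟨js, hjsJ, hjsne, hjslt⟩ := hstrict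
    have hjs : js ∈ J.erase i0 := Finset.mem_erase.mpr ⟨hjsne, hjsJ⟩
    have key : 1 ≤ ∑ j ∈ J.erase i0, ((v j : ℚ) - v0 * δ j) := by
      have h1 : 1 ≤ (v js : ℚ) - v0 * δ js := by
        have : v i0 * δ js + 1 ≤ v js := hjslt
        have := (Nat.cast_le (α := ℚ)).mpr this
        push_cast at this ⊢
        linarith
      have h2 : ∀ j ∈ J.erase i0, 0 ≤ (v j : ℚ) - v0 * δ j := by
        intro j hj
        have := hvlo j (Finset.mem_of_mem_erase hj)
        have := (Nat.cast_le (α := ℚ)).mpr this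
        push_cast at this
        linarith
      calc 1 ≤ (v js : ℚ) - v0 * δ js := h1
        _ ≤ _ := Finset.single_le_sum h2 hjs
    have heq : ∑ j ∈ J.erase i0, ((v j : ℚ) - nq * δ j)
        = (∑ j ∈ J.erase i0, ((v j : ℚ) - v0 * δ j)) + (v0 - nq) * A := by
      rw [hA_def, Finset.mul_sum, ← Finset.sum_add_distrib]
      refine Finset.sum_congr rfl fun j _ => ?_
      ring
    rw [heq]
    linarith
  -- bound on the complement sum
  have hT2 : -(nq * E) ≤ ∑ k ∈ Jᶜ, ((v k : ℚ) - nq * δ k) := by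
    have heq : -(nq * E) = ∑ k ∈ Jᶜ, (-(nq * (δ k : ℚ))) := by
      rw [hE_def, Finset.mul_sum, ← Finset.sum_neg_distrib]
    rw [heq]
    refine Finset.sum_le_sum fun k _ => ?_
    have : (0 : ℚ) ≤ (v k : ℚ) := by positivity
    linarith
  rw [hS, hθ0, hhq]
  have hnq1 : 1 ≤ nq := by rw [hnq_def]; exact_mod_cast hn
  have hnh : 0 ≤ nq * (1 + A + E) := by nlinarith
  have hT1' : nq * (1 + A + E) * ((v0 - nq) * A + 1)
      ≤ nq * (1 + A + E) * (∑ j ∈ J.erase i0, ((v j : ℚ) - nq * δ j)) :=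
    mul_le_mul_of_nonneg_left hT1 hnh
  nlinarith [hT1', hT2, mul_nonneg hA (le_trans zero_le_one hv0q), hv0q]
end

section
/- Let v : I → ℕ satisfy v(j) ≥ v(0)·δ(j) for all j ∈ J, and suppose there exists j ∈ J\{0} with v(j) > v(0)·δ(j). Then Σ_{i∈I} θ*(i)·(v(i) − n·δ(i)) ≥ 0; more precisely, Σ_{i∈I} θ*(i)·(v(i) − v(0)·δ|_J(i)) ≥ n·h, where δ|_J(i) = δ(i) for i ∈ J and δ|_J(i) = 0 for i ∈ K, while Σ_{i∈I} θ*(i)·(n·δ(i) − v(0)·δ|_J(i)) ≤ n·h. (These are the two estimates used in the r = 1 case of the proof of Proposition 3.1(1).) -/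
/-!
STATEMENT 3: For the specific stability vector θ* of the proof of
Proposition 3.1(1), and v : I → ℕ with v(j) ≥ v(0)·δ(j) for all j ∈ J and
v(j) > v(0)·δ(j) for some j ∈ J \ {0}, one has
Σ_{i∈I} θ*(i)·(v(i) − n·δ(i)) ≥ 0; more precisely
Σ_{i∈I} θ*(i)·(v(i) − v(0)·δ|_J(i)) ≥ n·h and
Σ_{i∈I} θ*(i)·(n·δ(i) − v(0)·δ|_J(i)) ≤ n·h,
where δ|_J(i) = δ(i) for i ∈ J and δ|_J(i) = 0 for i ∉ J.
-/
theorem stability_estimates_r_eq_one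
    {I : Type*} [Fintype I] [DecidableEq I]
    (i0 : I) (δ : I → ℕ) (hδ : ∀ i, 1 ≤ δ i) (hδ0 : δ i0 = 1)
    (n : ℕ) (hn : 1 ≤ n)
    (J : Finset I) (h0J : i0 ∈ J)
    (h : ℕ) (hh : h = ∑ i, δ i)
    (θs : I → ℚ)
    (hθsJ : ∀ j ∈ J, j ≠ i0 → θs j = (n : ℚ) * h)
    (hθsK : ∀ k, k ∉ J → θs k = 1)
    (hθs0 : θs i0 = (h : ℚ) - (∑ j ∈ J.erase i0, (n : ℚ) * h * δ j)
      - ∑ k ∈ Jᶜ, (δ k : ℚ))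
    (v : I → ℕ)
    (hvlo : ∀ j ∈ J, v i0 * δ j ≤ v j)
    (hstrict : ∃ j ∈ J, j ≠ i0 ∧ v i0 * δ j < v j) :
    (0 ≤ ∑ i, θs i * ((v i : ℚ) - (n : ℚ) * δ i)) ∧
    ((n : ℚ) * h ≤
      ∑ i, θs i * ((v i : ℚ) - (v i0 : ℚ) * (if i ∈ J then (δ i : ℚ) else 0))) ∧
    (∑ i, θs i * ((n : ℚ) * δ i - (v i0 : ℚ) * (if i ∈ J then (δ i : ℚ) else 0))
      ≤ (n : ℚ) * h) := by
  have split : ∀ f : I → ℚ, ∑ i, f i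
      = f i0 + ((∑ j ∈ J.erase i0, f j) + ∑ k ∈ Jᶜ, f k) := by
    intro f
    rw [← Finset.sum_add_sum_compl J, ← Finset.add_sum_erase J f h0J, add_assoc]
  set S1 : ℚ := ∑ j ∈ J.erase i0, (δ j : ℚ) with hS1
  set S2 : ℚ := ∑ k ∈ Jᶜ, (δ k : ℚ) with hS2
  have hS1nn : 0 ≤ S1 := Finset.sum_nonneg fun j _ => by positivity
  have hS2nn : 0 ≤ S2 := Finset.sum_nonneg fun j _ => by positivity
  have hhq : (h : ℚ) = 1 + S1 + S2 := by
    have := split (fun i => (δ i : ℚ))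
    rw [hh]
    push_cast
    rw [this, hδ0]
    push_cast
    ring
  have hv0nn : (0:ℚ) ≤ (v i0 : ℚ) := by positivity
  have hnh : (1:ℚ) ≤ (n:ℚ) * h := by
    have h1 : (1:ℚ) ≤ (n:ℚ) := by exact_mod_cast hn
    have h2 : (1:ℚ) ≤ (h:ℚ) := by rw [hhq]; linarith
    nlinarith
  -- Claim A
  have hA : (n : ℚ) * h ≤
      ∑ i, θs i * ((v i : ℚ) - (v i0 : ℚ) * (if i ∈ J then (δ i : ℚ) else 0)) := by
    rw [split]
    have h0 : θs i0 * ((v i0 : ℚ) - (v i0 : ℚ) * (if i0 ∈ J then (δ i0 : ℚ) else 0)) = 0 := by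
      rw [if_pos h0J, hδ0]; push_cast; ring
    have hKnn : 0 ≤ ∑ k ∈ Jᶜ, θs k * ((v k : ℚ) - (v i0 : ℚ) * (if k ∈ J then (δ k : ℚ) else 0)) := by
      apply Finset.sum_nonneg
      intro k hk
      have hkJ : k ∉ J := Finset.mem_compl.mp hk
      rw [hθsK k hkJ, if_neg hkJ]
      simp only [mul_zero, sub_zero, one_mul]
      positivity
    have hterm_nn : ∀ j ∈ J.erase i0,
        0 ≤ θs j * ((v j : ℚ) - (v i0 : ℚ) * (if j ∈ J then (δ j : ℚ) else 0)) := by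
      intro j hj
      have hjJ := Finset.mem_of_mem_erase hj
      have hjne := Finset.ne_of_mem_erase hj
      rw [hθsJ j hjJ hjne, if_pos hjJ]
      have : (v i0 : ℚ) * δ j ≤ (v j : ℚ) := by exact_mod_cast hvlo j hjJ
      nlinarith
    obtain ⟨j, hjJ, hjne, hjlt⟩ := hstrict
    have hje : j ∈ J.erase i0 := Finset.mem_erase.mpr ⟨hjne, hjJ⟩
    have hsingle : θs j * ((v j : ℚ) - (v i0 : ℚ) * (if j ∈ J then (δ j : ℚ) else 0))
        ≤ ∑ j ∈ J.erase i0, θs j * ((v j : ℚ) - (v i0 : ℚ) * (if j ∈ J then (δ j : ℚ) else 0)) :=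
      Finset.single_le_sum hterm_nn hje
    have hjq : (v i0 : ℚ) * δ j + 1 ≤ (v j : ℚ) := by exact_mod_cast hjlt
    have hjterm : (n : ℚ) * h ≤ θs j * ((v j : ℚ) - (v i0 : ℚ) * (if j ∈ J then (δ j : ℚ) else 0)) := by
      rw [hθsJ j hjJ hjne, if_pos hjJ]
      nlinarith
    linarith
  -- Claim B
  have hB : (∑ i, θs i * ((n : ℚ) * δ i - (v i0 : ℚ) * (if i ∈ J then (δ i : ℚ) else 0)))
      ≤ (n : ℚ) * h := by
    rw [split]
    have e1 : ∑ j ∈ J.erase i0, θs j * ((n : ℚ) * δ j - (v i0 : ℚ) * (if j ∈ J then (δ j : ℚ) else 0))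
        = ((n:ℚ) * h * ((n:ℚ) - (v i0 : ℚ))) * S1 := by
      rw [hS1, Finset.mul_sum]
      apply Finset.sum_congr rfl
      intro j hj
      have hjJ := Finset.mem_of_mem_erase hj
      rw [hθsJ j hjJ (Finset.ne_of_mem_erase hj), if_pos hjJ]
      ring
    have e2 : ∑ k ∈ Jᶜ, θs k * ((n : ℚ) * δ k - (v i0 : ℚ) * (if k ∈ J then (δ k : ℚ) else 0))
        = (n:ℚ) * S2 := by
      rw [hS2, Finset.mul_sum]
      apply Finset.sum_congr rfl
      intro k hk
      have hkJ : k ∉ J := Finset.mem_compl.mp hk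
      rw [hθsK k hkJ, if_neg hkJ]
      ring
    have e0 : θs i0 = (h : ℚ) - (n:ℚ) * h * S1 - S2 := by
      rw [hθs0, hS1, hS2, Finset.mul_sum]
    rw [e1, e2, e0, if_pos h0J, hδ0]
    push_cast
    nlinarith [mul_nonneg hv0nn (by linarith : (0:ℚ) ≤ 1 + S1)]
  refine ⟨?_, hA, hB⟩
  have key : ∑ i, θs i * ((v i : ℚ) - (n : ℚ) * δ i)
      = (∑ i, θs i * ((v i : ℚ) - (v i0 : ℚ) * (if i ∈ J then (δ i : ℚ) else 0)))
        - ∑ i, θs i * ((n : ℚ) * δ i - (v i0 : ℚ) * (if i ∈ J then (δ i : ℚ) else 0)) := by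
    rw [← Finset.sum_sub_distrib]
    apply Finset.sum_congr rfl
    intro i _
    ring
  rw [key]; linarith
end
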